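/- Let R = 𝔽₂[c₁,…,c_k] be a polynomial ring over ℤ/2ℤ (with the convention c_{k+1} = 0), and let D : R → R be the 𝔽₂-derivation determined by D(cᵢ) = c₁cᵢ + (i−1)c_{i+1} for each i. Then D(∏_{i=2}^{k} cᵢ) is congruent to (k−1)·∏_{i=1}^{k} cᵢ modulo the ideal of R generated by the squares c₁²,…,c_k². -/

import Mathlib

open MvPolynomial Finset

lemma deriv_prod {R A : Type*} [CommRing R] [CommRing A] [Algebra R A]
    (D : Derivation R A A) {ι : Type*} [DecidableEq ι] (s : Finset ι) (f : ι → A) :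
    D (∏ i ∈ s, f i) = ∑ j ∈ s, D (f j) * ∏ i ∈ s.erase j, f i := by
  induction s using Finset.induction_on with
  | empty => simp
  | insert a s h ih =>
    rw [Finset.prod_insert h, Derivation.leibniz, smul_eq_mul, smul_eq_mul, ih,
      Finset.sum_insert h, Finset.erase_insert h, Finset.mul_sum]
    rw [add_comm]
    congr 1
    · ring
    · apply Finset.sum_congr rfl
      intro j hj
      rw [Finset.erase_insert_of_ne (by rintro rfl; exact h hj)]
      rw [Finset.prod_insert (fun hh => h (Finset.mem_of_mem_erase hh))]
      ring

/-- Wu's formula derivation on `𝔽₂[c₁, …, c_k]`. -/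
theorem sq2_top_class (k : ℕ) (hk : 1 ≤ k)
    (D : Derivation (ZMod 2) (MvPolynomial (Fin k) (ZMod 2)) (MvPolynomial (Fin k) (ZMod 2)))
    (c : ℕ → MvPolynomial (Fin k) (ZMod 2))
    (hc : ∀ i : ℕ, (h : 1 ≤ i ∧ i ≤ k) → c i = X (⟨i - 1, by omega⟩ : Fin k))
    (hc0 : ∀ i : ℕ, (i = 0 ∨ k < i) → c i = 0)
    (hD : ∀ i : ℕ, 1 ≤ i → i ≤ k →
      D (c i) = c 1 * c i + (C ((i - 1 : ℕ) : ZMod 2)) * c (i + 1)) :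
    D (∏ i ∈ Finset.Icc 2 k, c i) - (C ((k - 1 : ℕ) : ZMod 2)) * ∏ i ∈ Finset.Icc 1 k, c i ∈
      Ideal.span (Set.range fun i : Fin k => (X i : MvPolynomial (Fin k) (ZMod 2)) ^ 2) := by
  set I := Ideal.span (Set.range fun i : Fin k => (X i : MvPolynomial (Fin k) (ZMod 2)) ^ 2)
  rw [deriv_prod]
  -- rewrite each D (c j)
  have hrw : ∀ j ∈ Finset.Icc 2 k, D (c j) * ∏ i ∈ (Finset.Icc 2 k).erase j, c i
      = c 1 * c j * ∏ i ∈ (Finset.Icc 2 k).erase j, c i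
        + (C ((j - 1 : ℕ) : ZMod 2)) * c (j + 1) * ∏ i ∈ (Finset.Icc 2 k).erase j, c i := by
    intro j hj
    rw [Finset.mem_Icc] at hj
    rw [hD j (by omega) hj.2, add_mul]
  rw [Finset.sum_congr rfl hrw, Finset.sum_add_distrib]
  -- first sum equals (k-1) * prod over [1,k]
  have h1 : ∑ j ∈ Finset.Icc 2 k, c 1 * c j * ∏ i ∈ (Finset.Icc 2 k).erase j, c i
      = (C ((k - 1 : ℕ) : ZMod 2)) * ∏ i ∈ Finset.Icc 1 k, c i := by
    have hins : Finset.Icc 1 k = insert 1 (Finset.Icc 2 k) := by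
      ext x; simp only [Finset.mem_Icc, Finset.mem_insert]; omega
    rw [Finset.sum_congr rfl (fun j hj => by
      rw [mul_assoc, Finset.mul_prod_erase _ _ hj])]
    rw [Finset.sum_const, Nat.card_Icc, show k + 1 - 2 = k - 1 from by omega, hins,
      Finset.prod_insert (by simp), nsmul_eq_mul, map_natCast]
  rw [h1, add_sub_cancel_left]
  -- second sum is in the ideal
  apply Ideal.sum_mem
  intro j hj
  rw [Finset.mem_Icc] at hj
  rcases eq_or_lt_of_le hj.2 with rfl | hjk
  · rw [hc0 (j + 1) (Or.inr (by omega))]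
    simp
  · -- j < k, so j+1 ∈ Icc 2 k \ {j}, term divisible by c(j+1)^2
    have hmem : j + 1 ∈ (Finset.Icc 2 k).erase j := by
      rw [Finset.mem_erase, Finset.mem_Icc]; omega
    rw [← Finset.mul_prod_erase _ _ hmem]
    have hX : c (j + 1) = X (⟨j, by omega⟩ : Fin k) := by
      rw [hc (j + 1) ⟨by omega, by omega⟩]
      exact congrArg X (Fin.ext (show j + 1 - 1 = j from by omega))
    have : C ((j - 1 : ℕ) : ZMod 2) * c (j + 1) *
        (c (j + 1) * ∏ i ∈ ((Finset.Icc 2 k).erase j).erase (j + 1), c i)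
        = (C ((j - 1 : ℕ) : ZMod 2) * ∏ i ∈ ((Finset.Icc 2 k).erase j).erase (j + 1), c i)
          * (X (⟨j, by omega⟩ : Fin k)) ^ 2 := by
      rw [hX]; ring
    rw [this]
    exact Ideal.mul_mem_left _ _ (Ideal.subset_span ⟨⟨j, by omega⟩, rfl⟩)
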